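/- arXiv:1109.2359 — 3 statements merged into one kernel-verified Lean document; each statement's English description precedes it below -/
import Mathlib

section
/- Let χ be a weight vector and let Q(χ) = {p_1, …, p_m} be the set of primes dividing at least one coordinate χ_i, with p-contents (p_i)χ. Let R be the quotient of the disjoint union ⊔_{i=1}^{m} P((p_i)χ) by the equivalence relation generated by e((p_i)χ/1)(z) ∼ e((p_j)χ/1)(z) for all z ∈ ℂP^n and all 1 ≤ i, j ≤ m, with the quotient topology. Then the map R → P(χ) induced by the maps e(χ/(p_i)χ) is well defined and a homeomorphism. That is, P(χ), together with the maps e(χ/(p_i)χ), is the colimit of the diagram of maps e((p_i)χ/1) : ℂP^n → P((p_i)χ). -/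
noncomputable section

/-- The unit sphere in `ℂ^m` (the sphere `S^{2m-1}`). -/
abbrev Sph (m : ℕ) : Type := {z : Fin m → ℂ // ∑ i, ‖z i‖ ^ 2 = 1}

/-- The relation on the sphere whose quotient is the weighted projective space `P(χ)`:
`z ∼ w` iff `w = t ·_χ z` for some unimodular `t`. -/
def wRel (m : ℕ) (χ : Fin m → ℕ) (z w : Sph m) : Prop :=
  ∃ t : ℂ, ‖t‖ = 1 ∧ ∀ i, (w : Fin m → ℂ) i = t ^ χ i * (z : Fin m → ℂ) i

/-- The weighted projective space `P(χ)`, with the quotient topology. -/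
abbrev WP (m : ℕ) (χ : Fin m → ℕ) : Type := Quot (wRel m χ)

/-- The class `[z]_χ` of a point of the sphere in `P(χ)`. -/
def wpMk (m : ℕ) (χ : Fin m → ℕ) (z : Sph m) : WP m χ := Quot.mk _ z

/-- `s(χ,ω)`: the least positive integer `s` with `ω i ∣ s * χ i` for all `i`. -/
def sVal (m : ℕ) (χ ω : Fin m → ℕ) : ℕ := sInf {s : ℕ | 0 < s ∧ ∀ i, ω i ∣ s * χ i}

/-- The exponents `d i = s(χ,ω)·χ i/ω i` of the map `e(χ/ω)`. -/
def dExp (m : ℕ) (χ ω : Fin m → ℕ) (i : Fin m) : ℕ := sVal m χ ω * χ i / ω i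

/-- `IsNorm m χ v w` says that `w` is the normalisation `N_χ(v)`, i.e. `w` lies on the
sphere and has the form `(λ^{χ_0} v_0, …)` for some real `λ > 0`. -/
def IsNorm (m : ℕ) (χ : Fin m → ℕ) (v : Fin m → ℂ) (w : Sph m) : Prop :=
  ∃ l : ℝ, 0 < l ∧ ∀ i, (w : Fin m → ℂ) i = (l : ℂ) ^ χ i * v i

/-- Coordinatewise powers of a point of the sphere. -/
def powVec (m : ℕ) (d : Fin m → ℕ) (z : Sph m) : Fin m → ℂ :=
  fun i => (z : Fin m → ℂ) i ^ d i

/-- `IsEMap m χ ω e` says that `e` is the canonical map `e(χ/ω) : P(ω) → P(χ)`: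
it is continuous and sends `[z]_ω` to `[N_χ(z_0^{d_0}, …, z_n^{d_n})]_χ`. -/
def IsEMap (m : ℕ) (χ ω : Fin m → ℕ) (e : WP m ω → WP m χ) : Prop :=
  Continuous e ∧ ∀ z w : Sph m,
    IsNorm m χ (powVec m (dExp m χ ω) z) w → e (wpMk m ω z) = wpMk m χ w

/-- The set `Q(χ)` of primes dividing at least one coordinate of `χ`, as a type. -/
abbrev PrimesOf (m : ℕ) (χ : Fin m → ℕ) : Type := {p : ℕ // p.Prime ∧ ∃ i, p ∣ χ i}

/-- The `p`-content of `χ`: the weight vector `(p^{a_0}, …, p^{a_n})` where `p^{a_i}`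
is the exact power of `p` dividing `χ_i`. -/
def pCont (m : ℕ) (p : ℕ) (χ : Fin m → ℕ) : Fin m → ℕ :=
  fun i => p ^ (χ i).factorization p

/-!
Since `e(χ/(p)χ) ∘ e((p)χ/1) = e(χ/1)` for every `p ∈ Q(χ)`, the maps `e(χ/(p)χ)` descend to a
continuous surjection `R → P(χ)`. `R` is compact and `P(χ)`, the quotient of a compact space by
a compact group acting continuously, is Hausdorff, so only injectivity is left. Since every
`e((q)χ/1)` is onto, it suffices to compare two points of a single `P((p)χ)` with the same
image; they differ by a torus element `ζ` with `ζᵢ ^ αᵢ = 1`, where `αᵢ` is the prime-to-`p`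
part of `χᵢ`. For a prime `q ∣ αᵢ` (so `q ∈ Q(χ)` and `q ≠ p`) the `q`-part of `ζ` can be
written `η ^ (p)χ` with `η ^ (q)χ = 1`. Lifting to `ℂPⁿ` and going through `P((q)χ)`, where `η`
acts trivially, shows that this part does not change the class in `R`; induction on the orders
removes all of `ζ`.
-/

open scoped Pointwise

lemma exists_pow_mul_eq_of_coprime {G : Type*} [CommGroup G] {ζ : G} {P r s : ℕ}
    (hζ : ζ ^ (s * r) = 1) (hcop : Nat.Coprime (P * r) s) :
    ∃ η ζ' : G, η ^ s = 1 ∧ ζ' ^ r = 1 ∧ η ^ P * ζ' = ζ := by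
  set A := Nat.gcdA (P * r) s
  set B := Nat.gcdB (P * r) s
  have hbez : ((P * r : ℕ) : ℤ) * A + s * B = 1 := by
    rw [← Nat.gcd_eq_gcd_ab, hcop, Nat.cast_one]
  have hζ' : ζ ^ ((s * r : ℕ) : ℤ) = 1 := by rw [zpow_natCast, hζ]
  refine ⟨ζ ^ ((r : ℤ) * A), ζ ^ ((s : ℤ) * B), ?_, ?_, ?_⟩
  · rw [← zpow_natCast, ← zpow_mul,
      show (r : ℤ) * A * s = ((s * r : ℕ) : ℤ) * A by push_cast; ring, zpow_mul, hζ', one_zpow]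
  · rw [← zpow_natCast, ← zpow_mul,
      show (s : ℤ) * B * r = ((s * r : ℕ) : ℤ) * B by push_cast; ring, zpow_mul, hζ', one_zpow]
  · have hexp : (r : ℤ) * A * P + s * B = 1 := by push_cast at hbez; linear_combination hbez
    rw [← zpow_natCast, ← zpow_mul, ← zpow_add, hexp, zpow_one]

variable {m : ℕ}

lemma sVal_eq_one {χ ω : Fin m → ℕ} (h : ∀ i, ω i ∣ χ i) : sVal m χ ω = 1 := by
  have h1 : 1 ∈ {s : ℕ | 0 < s ∧ ∀ i, ω i ∣ s * χ i} := ⟨one_pos, fun i => by simpa using h i⟩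
  exact le_antisymm (Nat.sInf_le h1) (Nat.sInf_mem ⟨1, h1⟩).1

lemma dExp_pCont (p : ℕ) (χ : Fin m → ℕ) (i : Fin m) :
    dExp m χ (pCont m p χ) i = ordCompl[p] (χ i) := by
  rw [dExp, sVal_eq_one (ω := pCont m p χ) fun j => Nat.ordProj_dvd (χ j) p, one_mul]
  rfl

lemma dExp_one (ω : Fin m → ℕ) (i : Fin m) : dExp m ω (fun _ => 1) i = ω i := by
  rw [dExp, sVal_eq_one fun _ => one_dvd _, one_mul, Nat.div_one]

lemma exists_sum_mul_pow_eq_one {ι : Type*} [Fintype ι] {g : ι → ℝ} {k : ι → ℕ}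
    (hg : ∀ i, 0 ≤ g i) {j : ι} (hj : 0 < g j) (hk : ∀ i, k i ≠ 0) :
    ∃ l : ℝ, 0 < l ∧ ∑ i, g i * l ^ k i = 1 := by
  set f : ℝ → ℝ := fun l => ∑ i, g i * l ^ k i
  have hf0 : f 0 = 0 := Finset.sum_eq_zero fun i _ => by simp [zero_pow (hk i)]
  set M : ℝ := 1 + 1 / g j
  have hM : 1 ≤ M := le_add_of_nonneg_right (by positivity)
  have hfM : 1 ≤ f M := calc
    (1 : ℝ) ≤ g j * M := by rw [mul_add, mul_one_div_cancel hj.ne']; linarith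
    _ ≤ g j * M ^ k j := mul_le_mul_of_nonneg_left (le_self_pow₀ hM (hk j)) hj.le
    _ ≤ f M := Finset.single_le_sum (f := fun i => g i * M ^ k i)
        (fun i _ => mul_nonneg (hg i) (by positivity)) (Finset.mem_univ j)
  have hcont : Continuous f := by fun_prop
  obtain ⟨l, hl, hfl⟩ := intermediate_value_Icc (by linarith) hcont.continuousOn
    (show (1 : ℝ) ∈ Set.Icc (f 0) (f M) from ⟨by rw [hf0]; exact zero_le_one, hfM⟩)
  refine ⟨l, hl.1.lt_of_ne ?_, hfl⟩
  rintro rfl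
  exact zero_ne_one (hf0.symm.trans hfl)

lemma exists_circle_pow_eq_one_of_pow_eq {a b : ℂ} {d : ℕ} (hd : d ≠ 0) (h : a ^ d = b ^ d) :
    ∃ ζ : Circle, ζ ^ d = 1 ∧ a = ζ * b := by
  by_cases hb : b = 0
  · refine ⟨1, one_pow d, ?_⟩
    rw [hb, zero_pow hd] at h
    rw [pow_eq_zero_iff hd |>.mp h, hb, mul_zero]
  · have hpow : (a / b) ^ d = 1 := by rw [div_pow, h, div_self (pow_ne_zero d hb)]
    refine ⟨⟨a / b, mem_sphere_zero_iff_norm.2 (Complex.norm_eq_one_of_pow_eq_one hpow hd)⟩,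
      Circle.coe_injective hpow, (div_mul_cancel₀ a hb).symm⟩

namespace Sph

lemma exists_ne_zero (z : Sph m) : ∃ i, (z : Fin m → ℂ) i ≠ 0 := by
  by_contra! h
  simpa [h] using z.2

instance : CompactSpace (Sph m) := by
  refine isCompact_iff_compactSpace.mp (Metric.isCompact_of_isClosed_isBounded
    (isClosed_eq (by fun_prop) continuous_const)
    ((Metric.isBounded_closedBall (x := 0) (r := 1)).subset ?_))
  intro z (hz : ∑ i, ‖z i‖ ^ 2 = 1)
  rw [Metric.mem_closedBall, dist_zero_right, pi_norm_le_iff_of_nonneg zero_le_one]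
  intro i
  have : ‖z i‖ ^ 2 ≤ 1 := hz ▸ Finset.single_le_sum (f := fun j => ‖z j‖ ^ 2)
    (fun j _ => by positivity) (Finset.mem_univ i)
  nlinarith [norm_nonneg (z i)]

instance : MulAction (Fin m → Circle) (Sph m) where
  smul ζ z := ⟨ζ • (z : Fin m → ℂ), by
    simpa [Pi.smul_apply, Circle.smul_def, norm_smul, Circle.norm_coe] using z.2⟩
  one_smul z := Subtype.ext (one_smul _ _)
  mul_smul ζ η z := Subtype.ext (mul_smul ζ η (z : Fin m → ℂ))

@[simp]
lemma smul_apply (ζ : Fin m → Circle) (z : Sph m) (i : Fin m) :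
    ((ζ • z : Sph m) : Fin m → ℂ) i = ζ i * (z : Fin m → ℂ) i := rfl

instance : ContinuousSMul (Fin m → Circle) (Sph m) :=
  ⟨(continuous_fst.smul (continuous_subtype_val.comp continuous_snd)).subtype_mk _⟩

end Sph

lemma eq_one_of_norm_eq_pow_mul {z w : Sph m} {k : Fin m → ℕ} (hk : ∀ i, k i ≠ 0) {r : ℝ}
    (hr : 0 ≤ r) (h : ∀ i, ‖(w : Fin m → ℂ) i‖ = r ^ k i * ‖(z : Fin m → ℂ) i‖) : r = 1 := by
  set a : Fin m → ℝ := fun i => ‖(z : Fin m → ℂ) i‖ ^ 2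
  have ha : ∑ i, a i = 1 := z.2
  have hsum : ∑ i, (r ^ 2) ^ k i * a i = 1 := by
    refine Eq.trans (Finset.sum_congr rfl fun i _ => ?_) w.2
    rw [h i, mul_pow, ← pow_mul, ← pow_mul, mul_comm 2]
  rcases lt_trichotomy r 1 with hlt | heq | hgt
  · have : ∑ i, (r ^ 2) ^ k i * a i ≤ ∑ i, r ^ 2 * a i :=
      Finset.sum_le_sum fun i _ => mul_le_mul_of_nonneg_right
        (pow_le_of_le_one (by positivity) (by nlinarith) (hk i)) (by positivity)
    rw [hsum, ← Finset.mul_sum, ha] at this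
    nlinarith
  · exact heq
  · have : ∑ i, r ^ 2 * a i ≤ ∑ i, (r ^ 2) ^ k i * a i :=
      Finset.sum_le_sum fun i _ => mul_le_mul_of_nonneg_right
        (le_self_pow₀ (by nlinarith) (hk i)) (by positivity)
    rw [hsum, ← Finset.mul_sum, ha] at this
    nlinarith

def weightHom (χ : Fin m → ℕ) : Circle →* (Fin m → Circle) :=
  MonoidHom.pi fun i => powMonoidHom (χ i)

lemma continuous_weightHom (χ : Fin m → ℕ) : Continuous (weightHom χ) :=
  continuous_pi fun i => continuous_pow (χ i)

section WP

variable {χ : Fin m → ℕ}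

lemma wRel_iff_exists_circle {z w : Sph m} :
    wRel m χ z w ↔ ∃ t : Circle, w = weightHom χ t • z :=
  ⟨fun ⟨t, ht, hw⟩ => ⟨⟨t, mem_sphere_zero_iff_norm.2 ht⟩, Subtype.ext (funext hw)⟩,
    fun ⟨t, hw⟩ => ⟨t, Circle.norm_coe t, fun i => by rw [hw]; rfl⟩⟩

lemma wRel_equivalence (χ : Fin m → ℕ) : Equivalence (wRel m χ) where
  refl z := wRel_iff_exists_circle.2 ⟨1, by rw [map_one, one_smul]⟩
  symm h := by
    obtain ⟨t, rfl⟩ := wRel_iff_exists_circle.1 h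
    exact wRel_iff_exists_circle.2 ⟨t⁻¹, by rw [map_inv, inv_smul_smul]⟩
  trans h h' := by
    obtain ⟨t, rfl⟩ := wRel_iff_exists_circle.1 h
    obtain ⟨s, rfl⟩ := wRel_iff_exists_circle.1 h'
    exact wRel_iff_exists_circle.2 ⟨s * t, by rw [map_mul, mul_smul]⟩

lemma wpMk_eq_iff {z w : Sph m} : wpMk m χ z = wpMk m χ w ↔ wRel m χ z w :=
  ⟨fun h => (wRel_equivalence χ).eqvGen_iff.mp (Quot.eqvGen_exact h), Quot.sound⟩

lemma wRel_iff_exists_ne_zero (hχ : ∀ i, χ i ≠ 0) {z w : Sph m} :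
    wRel m χ z w ↔ ∃ c : ℂ, c ≠ 0 ∧ ∀ i, (w : Fin m → ℂ) i = c ^ χ i * (z : Fin m → ℂ) i := by
  refine ⟨fun ⟨t, ht, hw⟩ => ⟨t, norm_ne_zero_iff.mp (ht ▸ one_ne_zero), hw⟩,
    fun ⟨c, _, hw⟩ => ⟨c, ?_, hw⟩⟩
  exact eq_one_of_norm_eq_pow_mul (z := z) (w := w) hχ (norm_nonneg c) fun i => by
    rw [hw, norm_mul, norm_pow]

instance : T2Space (WP m χ) := by
  have hopen : IsOpenQuotientMap (wpMk m χ) := by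
    refine ⟨Quot.mk_surjective, continuous_quot_mk, fun U hU => ?_⟩
    rw [← isQuotientMap_quot_mk.isOpen_preimage]
    convert isOpen_iUnion fun t : Circle => hU.smul (weightHom χ t)
    ext w
    simp only [Set.mem_preimage, Set.mem_image, Set.mem_iUnion, Set.mem_smul_set]
    change (∃ x ∈ U, wpMk m χ x = wpMk m χ w) ↔ _
    simp only [wpMk_eq_iff, wRel_iff_exists_circle]
    exact ⟨fun ⟨x, hx, t, hw⟩ => ⟨t, x, hx, hw.symm⟩,
      fun ⟨t, x, hx, hw⟩ => ⟨x, hx, t, hw.symm⟩⟩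
  rw [t2Space_iff_of_isOpenQuotientMap hopen]
  convert (isCompact_range (continuous_snd.prodMk
    ((continuous_weightHom χ).comp continuous_fst |>.smul continuous_snd) :
      Continuous fun tz : Circle × Sph m => (tz.2, weightHom χ tz.1 • tz.2))).isClosed
  ext ⟨z, w⟩
  simp only [Set.mem_ofPred_eq, Set.mem_range, Prod.mk.injEq, Prod.exists]
  rw [wpMk_eq_iff, wRel_iff_exists_circle]
  exact ⟨fun ⟨t, hw⟩ => ⟨t, z, rfl, hw.symm⟩, fun ⟨t, _, hz, hw⟩ => ⟨t, by rw [← hw, hz]⟩⟩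

end WP

lemma exists_isNorm {χ : Fin m → ℕ} (hχ : ∀ i, χ i ≠ 0) {v : Fin m → ℂ} (hv : v ≠ 0) :
    ∃ w : Sph m, IsNorm m χ v w := by
  obtain ⟨j, hj⟩ := Function.ne_iff.mp hv
  obtain ⟨l, hl, hsum⟩ := exists_sum_mul_pow_eq_one (g := fun i => ‖v i‖ ^ 2)
    (k := fun i => 2 * χ i) (fun i => by positivity) (j := j) (pow_pos (norm_pos_iff.mpr hj) 2)
    (fun i => mul_ne_zero two_ne_zero (hχ i))
  refine ⟨⟨fun i => (l : ℂ) ^ χ i * v i, Eq.trans (Finset.sum_congr rfl fun i _ => ?_) hsum⟩,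
    l, hl, fun i => rfl⟩
  rw [norm_mul, norm_pow, Complex.norm_real, Real.norm_of_nonneg hl.le]
  ring

lemma powVec_ne_zero (d : Fin m → ℕ) (z : Sph m) : powVec m d z ≠ 0 := by
  obtain ⟨j, hj⟩ := z.exists_ne_zero
  exact Function.ne_iff.mpr ⟨j, pow_ne_zero _ hj⟩

namespace IsEMap

variable {χ ω : Fin m → ℕ} {e : WP m ω → WP m χ}

lemma apply_eq_iff (he : IsEMap m χ ω e) (hχ : ∀ i, χ i ≠ 0) (z w : Sph m) :
    e (wpMk m ω z) = wpMk m χ w ↔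
      ∃ c : ℂ, c ≠ 0 ∧ ∀ i, (w : Fin m → ℂ) i = c ^ χ i * (z : Fin m → ℂ) i ^ dExp m χ ω i := by
  obtain ⟨N, l, hl, hN⟩ := exists_isNorm hχ (powVec_ne_zero (dExp m χ ω) z)
  have hl0 : (l : ℂ) ≠ 0 := Complex.ofReal_ne_zero.mpr hl.ne'
  rw [he.2 z N ⟨l, hl, hN⟩, wpMk_eq_iff, wRel_iff_exists_ne_zero hχ]
  constructor
  · rintro ⟨c, hc, hw⟩
    exact ⟨c * l, mul_ne_zero hc hl0, fun i => by rw [hw, hN, powVec, mul_pow]; ring⟩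
  · rintro ⟨c, hc, hw⟩
    refine ⟨c / l, div_ne_zero hc hl0, fun i => ?_⟩
    rw [hw, hN, powVec, div_pow]
    field_simp

lemma apply_eq_apply (he : IsEMap m χ ω e) (hχ : ∀ i, χ i ≠ 0) {z w : Sph m}
    (h : e (wpMk m ω z) = e (wpMk m ω w)) :
    ∃ c : ℂ, c ≠ 0 ∧ ∀ i, (w : Fin m → ℂ) i ^ dExp m χ ω i
      = c ^ χ i * (z : Fin m → ℂ) i ^ dExp m χ ω i := by
  obtain ⟨N, l, hl, hN⟩ := exists_isNorm hχ (powVec_ne_zero (dExp m χ ω) w)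
  have hl0 : (l : ℂ) ≠ 0 := Complex.ofReal_ne_zero.mpr hl.ne'
  rw [he.2 w N ⟨l, hl, hN⟩, he.apply_eq_iff hχ] at h
  obtain ⟨c, hc, hN'⟩ := h
  refine ⟨c / l, div_ne_zero hc hl0, fun i => ?_⟩
  have := (hN i).symm.trans (hN' i)
  rw [powVec] at this
  rw [div_pow, div_mul_eq_mul_div, eq_div_iff (pow_ne_zero _ hl0), ← this, mul_comm]

lemma apply_smul_eq (he : IsEMap m χ ω e) (hχ : ∀ i, χ i ≠ 0) {u w : Sph m}
    (h : e (wpMk m ω u) = wpMk m χ w) (η : Fin m → Circle) :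
    e (wpMk m ω (η • u)) = wpMk m χ ((fun i => η i ^ dExp m χ ω i) • w) := by
  obtain ⟨c, hc, hw⟩ := (he.apply_eq_iff hχ u w).mp h
  refine (he.apply_eq_iff hχ _ _).mpr ⟨c, hc, fun i => ?_⟩
  simp only [Sph.smul_apply, hw, Circle.coe_pow]
  ring

lemma exists_smul_eq_of_apply_eq (he : IsEMap m χ ω e) (hχ : ∀ i, χ i ≠ 0) (hω : ∀ i, ω i ≠ 0)
    (hfac : ∀ i, χ i = ω i * dExp m χ ω i) {z w : Sph m}
    (h : e (wpMk m ω z) = e (wpMk m ω w)) :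
    ∃ ζ : Fin m → Circle, (∀ i, ζ i ^ dExp m χ ω i = 1) ∧ wpMk m ω (ζ • z) = wpMk m ω w := by
  have hd : ∀ i, dExp m χ ω i ≠ 0 := fun i h0 => hχ i (by rw [hfac i, h0, mul_zero])
  obtain ⟨c, hc, hcw⟩ := he.apply_eq_apply hχ h
  have hroot : ∀ i, ∃ ζ : Circle, ζ ^ dExp m χ ω i = 1 ∧
      (w : Fin m → ℂ) i = ζ * (c ^ ω i * (z : Fin m → ℂ) i) := fun i =>
    exists_circle_pow_eq_one_of_pow_eq (hd i) (by rw [hcw, mul_pow, ← pow_mul, ← hfac])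
  choose ζ hζ hw using hroot
  refine ⟨ζ, hζ, wpMk_eq_iff.mpr ((wRel_iff_exists_ne_zero hω).mpr ⟨c, hc, fun i => ?_⟩)⟩
  rw [hw, Sph.smul_apply]
  ring

lemma surjective (he : IsEMap m χ ω e) (hχ : ∀ i, χ i ≠ 0)
    (hdvd : ∀ i, dExp m χ ω i ∣ χ i) : Function.Surjective e := by
  rintro ⟨w⟩
  have hd : ∀ i, dExp m χ ω i ≠ 0 := fun i h0 => hχ i (Nat.eq_zero_of_zero_dvd (h0 ▸ hdvd i))
  choose ρ hρ using fun i =>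
    IsAlgClosed.exists_pow_nat_eq ((w : Fin m → ℂ) i) (Nat.pos_of_ne_zero (hd i))
  obtain ⟨j, hj⟩ := w.exists_ne_zero
  have hρ0 : ρ ≠ 0 := Function.ne_iff.mpr
    ⟨j, fun h0 => hj (by rw [← hρ, h0, Pi.zero_apply, zero_pow (hd j)])⟩
  have hk : ∀ i, χ i / dExp m χ ω i ≠ 0 := fun i => (Nat.div_pos
    (Nat.le_of_dvd (Nat.pos_of_ne_zero (hχ i)) (hdvd i)) (Nat.pos_of_ne_zero (hd i))).ne'
  obtain ⟨z, ν, hν, hz⟩ := exists_isNorm hk hρ0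
  have hν0 : (ν : ℂ) ≠ 0 := Complex.ofReal_ne_zero.mpr hν.ne'
  refine ⟨wpMk m ω z, (he.apply_eq_iff hχ z w).mpr ⟨(ν : ℂ)⁻¹, inv_ne_zero hν0, fun i => ?_⟩⟩
  rw [hz, mul_pow, ← pow_mul, Nat.div_mul_cancel (hdvd i), hρ, inv_pow,
    inv_mul_cancel_left₀ (pow_ne_zero _ hν0)]

lemma comp_apply_eq {ν : Fin m → ℕ} {f : WP m ν → WP m ω} (he : IsEMap m χ ω e)
    (hf : IsEMap m ω ν f) (hχ : ∀ i, χ i ≠ 0) (hω : ∀ i, ω i ≠ 0)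
    (hfac : ∀ i, χ i = ω i * dExp m χ ω i) {k : Fin m → ℕ}
    (hk : ∀ i, dExp m ω ν i * dExp m χ ω i = k i) (z W : Sph m)
    (hW : IsNorm m χ (powVec m k z) W) :
    e (f (wpMk m ν z)) = wpMk m χ W := by
  obtain ⟨N, l, hl, hN⟩ := exists_isNorm hω (powVec_ne_zero (dExp m ω ν) z)
  obtain ⟨l', hl', hW⟩ := hW
  have hl0 : (l : ℂ) ≠ 0 := Complex.ofReal_ne_zero.mpr hl.ne'
  rw [hf.2 z N ⟨l, hl, hN⟩, he.apply_eq_iff hχ]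
  refine ⟨l' / l, div_ne_zero (Complex.ofReal_ne_zero.mpr hl'.ne') hl0, fun i => ?_⟩
  rw [hW, hN, powVec, powVec, mul_pow, ← pow_mul, ← pow_mul, ← hfac, hk, div_pow]
  field_simp

end IsEMap

def glueRel {ι X : Type*} {Y : ι → Type*} (Ins : ∀ p, X → Y p) (a b : Σ p, Y p) : Prop :=
  ∃ (p q : ι) (x : X), a = ⟨p, Ins p x⟩ ∧ b = ⟨q, Ins q x⟩

theorem exists_homeomorph_quot_glueRel {ι X Z : Type*} {Y : ι → Type*} [Finite ι] [Nonempty ι]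
    [∀ p, TopologicalSpace (Y p)] [∀ p, CompactSpace (Y p)] [TopologicalSpace Z] [T2Space Z]
    (Ins : ∀ p, X → Y p) (J : ∀ p, Y p → Z) (hJ : ∀ p, Continuous (J p))
    (hJsurj : ∀ p, Function.Surjective (J p)) (hInsSurj : ∀ p, Function.Surjective (Ins p))
    (hcomm : ∀ p q x, J p (Ins p x) = J q (Ins q x))
    (hJinj : ∀ p y y', J p y = J p y' → Quot.mk (glueRel Ins) ⟨p, y⟩ = Quot.mk _ ⟨p, y'⟩) :
    ∃ F : Quot (glueRel Ins) ≃ₜ Z, ∀ p y, F (Quot.mk _ ⟨p, y⟩) = J p y := by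
  let F : Quot (glueRel Ins) → Z := Quot.lift (fun a => J a.1 a.2) <| by
    rintro _ _ ⟨p, q, x, rfl, rfl⟩
    exact hcomm p q x
  have hsurj : Function.Surjective F := fun z => by
    obtain ⟨y, hy⟩ := hJsurj (Classical.arbitrary ι) z
    exact ⟨Quot.mk _ ⟨_, y⟩, hy⟩
  have hinj : Function.Injective F := by
    rintro ⟨p, y⟩ ⟨q, y'⟩ h
    obtain ⟨x, rfl⟩ := hInsSurj q y'
    calc Quot.mk (glueRel Ins) ⟨p, y⟩
        = Quot.mk _ ⟨p, Ins p x⟩ := hJinj p _ _ (h.trans (hcomm q p x))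
      _ = Quot.mk _ ⟨q, Ins q x⟩ := Quot.sound ⟨p, q, x, rfl, rfl⟩
  have hcont : Continuous (Equiv.ofBijective F ⟨hinj, hsurj⟩) :=
    continuous_quot_lift _ (continuous_sigma hJ)
  exact ⟨hcont.homeoOfEquivCompactToT2, fun p y => rfl⟩

lemma finite_primesOf {χ : Fin m → ℕ} (hχ : ∀ i, χ i ≠ 0) : Finite (PrimesOf m χ) :=
  Set.Finite.to_subtype <| (∏ i, χ i).primeFactors.finite_toSet.subset fun _ ⟨hp, i, hpi⟩ =>
    Nat.mem_primeFactors.mpr ⟨hp, hpi.trans (Finset.dvd_prod_of_mem χ (Finset.mem_univ i)),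
      Finset.prod_ne_zero_iff.mpr fun i _ => hχ i⟩

section Gluing

variable {χ : Fin m → ℕ}

lemma pCont_ne_zero (p : PrimesOf m χ) (i : Fin m) : pCont m p.1 χ i ≠ 0 :=
  pow_ne_zero _ p.2.1.ne_zero

lemma pCont_mul_dExp_pCont (p : ℕ) (i : Fin m) :
    pCont m p χ i * dExp m χ (pCont m p χ) i = χ i := by
  rw [dExp_pCont]
  exact Nat.ordProj_mul_ordCompl_eq_self (χ i) p

variable {Ins : ∀ p : PrimesOf m χ, WP m (fun _ => 1) → WP m (pCont m p.1 χ)}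
  (hIns : ∀ p, IsEMap m (pCont m p.1 χ) (fun _ => 1) (Ins p))
include hIns

lemma surjective_ins (p : PrimesOf m χ) : Function.Surjective (Ins p) :=
  (hIns p).surjective (pCont_ne_zero p) fun i => by rw [dExp_one]

lemma glue_mk_eq_mk_smul_pow_pCont (p q : PrimesOf m χ) {η : Fin m → Circle}
    (hη : ∀ i, η i ^ pCont m q.1 χ i = 1) (z : Sph m) :
    Quot.mk (glueRel Ins) ⟨p, wpMk m _ z⟩ =
      Quot.mk _ ⟨p, wpMk m _ ((fun i => η i ^ pCont m p.1 χ i) • z)⟩ := by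
  obtain ⟨⟨u⟩, hu⟩ := surjective_ins hIns p (wpMk m _ z)
  obtain ⟨v, hv⟩ := Quot.exists_rep (Ins q (wpMk m _ u))
  have hp : Ins p (wpMk m _ (η • u)) = wpMk m _ ((fun i => η i ^ pCont m p.1 χ i) • z) := by
    simpa only [dExp_one] using (hIns p).apply_smul_eq (pCont_ne_zero p) hu η
  have hq : Ins q (wpMk m _ (η • u)) = Ins q (wpMk m _ u) := by
    rw [(hIns q).apply_smul_eq (pCont_ne_zero q) hv.symm η]
    simp only [dExp_one, hη]
    rw [← Pi.one_def, one_smul, ← hv]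
    rfl
  calc Quot.mk (glueRel Ins) ⟨p, wpMk m _ z⟩
        = Quot.mk _ ⟨p, Ins p (wpMk m _ u)⟩ := by rw [← hu]; rfl
    _ = Quot.mk _ ⟨q, Ins q (wpMk m _ u)⟩ := Quot.sound ⟨p, q, _, rfl, rfl⟩
    _ = Quot.mk _ ⟨q, Ins q (wpMk m _ (η • u))⟩ := by rw [hq]
    _ = Quot.mk _ ⟨p, Ins p (wpMk m _ (η • u))⟩ := Quot.sound ⟨q, p, _, rfl, rfl⟩
    _ = _ := by rw [hp]

lemma glue_mk_eq_mk_smul_of_pow_eq_one (hχ : ∀ i, χ i ≠ 0) (p : PrimesOf m χ)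
    {k : Fin m → ℕ} (hk : ∀ i, k i ∣ ordCompl[p.1] (χ i))
    {ζ : Fin m → Circle} (hζ : ∀ i, ζ i ^ k i = 1) (z : Sph m) :
    Quot.mk (glueRel Ins) ⟨p, wpMk m _ z⟩ = Quot.mk _ ⟨p, wpMk m _ (ζ • z)⟩ := by
  induction hN : ∑ i, k i using Nat.strong_induction_on generalizing k ζ z with
  | _ N ih =>
  have hk0 : ∀ i, k i ≠ 0 := fun i h0 =>
    hχ i (Nat.eq_zero_of_zero_dvd ((h0 ▸ hk i).trans (Nat.ordCompl_dvd (χ i) p.1)))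
  by_cases h1 : ∀ i, k i = 1
  · rw [show ζ = 1 from funext fun i => by simpa [h1 i] using hζ i, one_smul]
  obtain ⟨i₀, hi₀⟩ := not_forall.mp h1
  set q := (k i₀).minFac
  have hq : q.Prime := Nat.minFac_prime hi₀
  have hqk : q ∣ k i₀ := Nat.minFac_dvd _
  have hqp : q ≠ p.1 := fun h => by
    have hqα := hqk.trans (hk i₀)
    rw [h] at hqα
    exact Nat.not_dvd_ordCompl p.2.1 (hχ i₀) hqα
  let Q : PrimesOf m χ := ⟨q, hq, i₀, (hqk.trans (hk i₀)).trans (Nat.ordCompl_dvd _ _)⟩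
  -- `q ≠ p` makes `(p)χ` invertible modulo the `q`-part of the orders
  have hsplit : ∀ i, ∃ η ζ' : Circle, η ^ (q ^ (k i).factorization q) = 1 ∧
      ζ' ^ ordCompl[q] (k i) = 1 ∧ η ^ pCont m p.1 χ i * ζ' = ζ i := fun i =>
    exists_pow_mul_eq_of_coprime (by rw [Nat.ordProj_mul_ordCompl_eq_self]; exact hζ i)
      (Nat.Coprime.mul_left (Nat.Coprime.pow _ _ ((Nat.coprime_primes p.2.1 hq).mpr hqp.symm))
        ((Nat.coprime_ordCompl hq (hk0 i)).pow_left _).symm)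
  choose η ζ' hη hζ' hηζ using hsplit
  have hηQ : ∀ i, η i ^ pCont m Q.1 χ i = 1 := fun i => by
    obtain ⟨t, ht⟩ := Nat.ordProj_dvd_ordProj_of_dvd (hχ i)
      ((hk i).trans (Nat.ordCompl_dvd (χ i) p.1)) q
    rw [pCont, ht, pow_mul, hη, one_pow]
  have hlt : ∑ i, ordCompl[q] (k i) < N := hN ▸ Finset.sum_lt_sum
    (fun i _ => Nat.ordCompl_le (k i) q) ⟨i₀, Finset.mem_univ _, Nat.div_lt_self
      (Nat.pos_of_ne_zero (hk0 i₀)) (Nat.one_lt_pow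
        (hq.factorization_pos_of_dvd (hk0 i₀) hqk).ne' hq.one_lt)⟩
  rw [glue_mk_eq_mk_smul_pow_pCont hIns p Q hηQ z,
    ih _ hlt (fun i => (Nat.ordCompl_dvd (k i) q).trans (hk i)) hζ' _ rfl, smul_smul]
  congr 4
  exact funext fun i => (mul_comm _ _).trans (hηζ i)

variable {J : ∀ p : PrimesOf m χ, WP m (pCont m p.1 χ) → WP m χ}
  (hJ : ∀ p, IsEMap m χ (pCont m p.1 χ) (J p))
include hJ

lemma glue_mk_eq_mk_of_apply_eq (hχ : ∀ i, χ i ≠ 0) (p : PrimesOf m χ)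
    (y y' : WP m (pCont m p.1 χ)) (h : J p y = J p y') :
    Quot.mk (glueRel Ins) ⟨p, y⟩ = Quot.mk _ ⟨p, y'⟩ := by
  rcases y with ⟨z⟩
  rcases y' with ⟨w⟩
  obtain ⟨ζ, hζ, hw⟩ := (hJ p).exists_smul_eq_of_apply_eq hχ (pCont_ne_zero p)
    (fun i => (pCont_mul_dExp_pCont p.1 i).symm) h
  simp only [dExp_pCont] at hζ
  show Quot.mk (glueRel Ins) ⟨p, wpMk m _ z⟩ = Quot.mk (glueRel Ins) ⟨p, wpMk m _ w⟩
  rw [← hw]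
  exact glue_mk_eq_mk_smul_of_pow_eq_one hIns hχ p (fun i => dvd_rfl) hζ z

lemma apply_ins_eq_apply_ins (hχ : ∀ i, χ i ≠ 0) (p q : PrimesOf m χ) (x : WP m (fun _ => 1)) :
    J p (Ins p x) = J q (Ins q x) := by
  rcases x with ⟨u⟩
  obtain ⟨W, hW⟩ := exists_isNorm hχ (powVec_ne_zero χ u)
  have key : ∀ p, J p (Ins p (wpMk m _ u)) = wpMk m χ W := fun p =>
    (hJ p).comp_apply_eq (hIns p) hχ (pCont_ne_zero p)
      (fun i => (pCont_mul_dExp_pCont p.1 i).symm)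
      (fun i => by rw [dExp_one, pCont_mul_dExp_pCont]) u W hW
  exact (key p).trans (key q).symm

end Gluing

theorem statement11_general (n : ℕ) (χ : Fin (n + 1) → ℕ) (hχ : ∀ i, 1 ≤ χ i)
    (hQ : Nonempty (PrimesOf (n + 1) χ))
    (Ins : ∀ p : PrimesOf (n + 1) χ, WP (n + 1) (fun _ => 1) → WP (n + 1) (pCont (n + 1) p.1 χ))
    (hIns : ∀ p, IsEMap (n + 1) (pCont (n + 1) p.1 χ) (fun _ => 1) (Ins p))
    (J : ∀ p : PrimesOf (n + 1) χ, WP (n + 1) (pCont (n + 1) p.1 χ) → WP (n + 1) χ)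
    (hJ : ∀ p, IsEMap (n + 1) χ (pCont (n + 1) p.1 χ) (J p)) :
    ∃ F : Quot (fun a b : (p : PrimesOf (n + 1) χ) × WP (n + 1) (pCont (n + 1) p.1 χ) =>
        ∃ (p q : PrimesOf (n + 1) χ) (z : WP (n + 1) (fun _ => 1)),
          a = ⟨p, Ins p z⟩ ∧ b = ⟨q, Ins q z⟩) ≃ₜ WP (n + 1) χ,
      ∀ (p : PrimesOf (n + 1) χ) (x : WP (n + 1) (pCont (n + 1) p.1 χ)),
        F (Quot.mk _ ⟨p, x⟩) = J p x := by
  have hχ0 : ∀ i, χ i ≠ 0 := fun i => Nat.one_le_iff_ne_zero.mp (hχ i)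
  have := finite_primesOf hχ0
  exact exists_homeomorph_quot_glueRel Ins J (fun p => (hJ p).1)
    (fun p => (hJ p).surjective hχ0 fun i => by rw [dExp_pCont]; exact Nat.ordCompl_dvd _ _)
    (surjective_ins hIns) (apply_ins_eq_apply_ins hIns hJ hχ0)
    (glue_mk_eq_mk_of_apply_eq hIns hJ hχ0)

/-- `P(χ)`, with the insertion maps `e(χ/(p)χ)`, is the colimit of the
diagram of the maps `e((p)χ/1) : ℂP^n → P((p)χ)` over the primes `p ∈ Q(χ)`: the map from
the quotient `R` of `⊔_p P((p)χ)` by the equivalence relation generated by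
`e((p)χ/1)(z) ∼ e((q)χ/1)(z)` induced by the maps `e(χ/(p)χ)` is well defined and a
homeomorphism. -/
theorem statement11 (n : ℕ) (hn : 1 ≤ n) (χ : Fin (n + 1) → ℕ) (hχ : ∀ i, 1 ≤ χ i)
    (hQ : Nonempty (PrimesOf (n + 1) χ))
    (Ins : ∀ p : PrimesOf (n + 1) χ, WP (n + 1) (fun _ => 1) → WP (n + 1) (pCont (n + 1) p.1 χ))
    (hIns : ∀ p, IsEMap (n + 1) (pCont (n + 1) p.1 χ) (fun _ => 1) (Ins p))
    (J : ∀ p : PrimesOf (n + 1) χ, WP (n + 1) (pCont (n + 1) p.1 χ) → WP (n + 1) χ)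
    (hJ : ∀ p, IsEMap (n + 1) χ (pCont (n + 1) p.1 χ) (J p)) :
    ∃ F : Quot (fun a b : (p : PrimesOf (n + 1) χ) × WP (n + 1) (pCont (n + 1) p.1 χ) =>
        ∃ (p q : PrimesOf (n + 1) χ) (z : WP (n + 1) (fun _ => 1)),
          a = ⟨p, Ins p z⟩ ∧ b = ⟨q, Ins q z⟩) ≃ₜ WP (n + 1) χ,
      ∀ (p : PrimesOf (n + 1) χ) (x : WP (n + 1) (pCont (n + 1) p.1 χ)),
        F (Quot.mk _ ⟨p, x⟩) = J p x :=
  statement11_general n χ hχ hQ Ins hIns J hJ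
end
end

section
/- Let n ≥ 1, let χ : Fin (n+1) → ℕ be a weight vector, and let χ' = (χ_0, …, χ_{n-1}). The circle T acts continuously on S^{2n-1} × S^1 (where S^{2n-1} ⊂ ℂ^n and S^1 ⊂ ℂ are the unit spheres) by t·(z, w) = ((t^{χ_0}z_0, …, t^{χ_{n-1}}z_{n-1}), t^{χ_n}w). The orbit space of this action, with the quotient topology, is homeomorphic to the weighted lens space L(χ_n; χ'). -/
noncomputable section

/-- The relation on the sphere whose quotient is the weighted lens space `L(k;χ)`. -/
def lensRel (m k : ℕ) (χ : Fin m → ℕ) (z w : Sph m) : Prop :=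
  ∃ ζ : ℂ, ζ ^ k = 1 ∧ ∀ i, (w : Fin m → ℂ) i = ζ ^ χ i * (z : Fin m → ℂ) i

/-- The weighted lens space `L(k;χ)`, with the quotient topology. -/
abbrev Lens (m k : ℕ) (χ : Fin m → ℕ) : Type := Quot (lensRel m k χ)
/-!
Fix a `k`-th root `t` of `w⁻¹`; the orbit of `(z, w)` contains `(t·z, 1)`, and two points
`(z, 1)`, `(z', 1)` lie in one orbit exactly when `z' = ζ·z` with `ζ^k = 1`. So `[z, w] ↦ [t·z]`
is a bijection onto `L(k; χ')`, with inverse `[z] ↦ [z, 1]`; it is well defined because two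
choices of `t` differ by a `k`-th root of unity. The choice of `t` cannot be made continuously
in `w`, so continuity is read off the compact-to-Hausdorff quotient map `(t, z) ↦ t·(z, 1)`,
along which the map becomes `(t, z) ↦ [z]`.
-/

open ComplexConjugate Topology

section WeightedCircleAction

local notation "𝕋" => {t : ℂ // ‖t‖ = 1}

instance : CompactSpace 𝕋 :=
  (isCompact_iff_compactSpace (s := {t : ℂ | ‖t‖ = 1})).mp <| by
    simpa only [Metric.sphere, dist_zero_right] using isCompact_sphere (0 : ℂ) 1

instance (n : ℕ) : CompactSpace (Sph n) := by
  refine isCompact_iff_compactSpace.mp (Metric.isCompact_of_isClosed_isBounded ?_ ?_)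
  · exact isClosed_eq (by fun_prop) continuous_const
  · refine (Metric.isBounded_closedBall (x := 0) (r := 1)).subset fun z hz => ?_
    rw [mem_closedBall_zero_iff, pi_norm_le_iff_of_nonneg zero_le_one]
    intro i
    have hi : ‖z i‖ ^ 2 ≤ 1 :=
      hz ▸ Finset.single_le_sum (fun j _ => sq_nonneg ‖z j‖) (Finset.mem_univ i)
    exact (pow_le_one_iff_of_nonneg (norm_nonneg _) two_ne_zero).mp hi

variable {n k : ℕ} (χ : Fin n → ℕ)

lemma exists_pow_eq_of_norm_eq_one (hk : k ≠ 0) (w : 𝕋) : ∃ t : 𝕋, (t : ℂ) ^ k = w := by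
  obtain ⟨t, ht⟩ := IsAlgClosed.exists_pow_nat_eq (w : ℂ) (Nat.pos_of_ne_zero hk)
  refine ⟨⟨t, (pow_eq_one_iff_of_nonneg (norm_nonneg t) hk).mp ?_⟩, ht⟩
  rw [← norm_pow, ht, w.2]

def wSmul (t : 𝕋) (z : Sph n) : Sph n :=
  ⟨fun i => (t : ℂ) ^ χ i * (z : Fin n → ℂ) i, by simpa [norm_mul, norm_pow, t.2] using z.2⟩

lemma wSmul_wSmul (s t : 𝕋) (z : Sph n) :
    wSmul χ s (wSmul χ t z) = wSmul χ ⟨s * t, by simp [s.2, t.2]⟩ z := by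
  ext i
  simp only [wSmul, mul_pow, mul_assoc]

lemma wSmul_one (z : Sph n) : wSmul χ ⟨1, norm_one⟩ z = z := by
  ext i
  simp [wSmul]

lemma wSmul_wSmul_conj (t : 𝕋) (z : Sph n) :
    wSmul χ t (wSmul χ ⟨conj (t : ℂ), by simp [t.2]⟩ z) = z := by
  rw [wSmul_wSmul]
  convert wSmul_one χ z using 3
  simp [Complex.mul_conj', t.2]

lemma continuous_wSmul : Continuous fun p : 𝕋 × Sph n => wSmul χ p.1 p.2 :=
  (continuous_pi fun i => ((continuous_subtype_val.comp continuous_fst).pow _).mul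
    ((continuous_apply i).comp (continuous_subtype_val.comp continuous_snd))).subtype_mk _

lemma lensMk_wSmul_eq_of_pow_eq {s t : 𝕋} (h : (s : ℂ) ^ k = (t : ℂ) ^ k)
    (z : Sph n) : Quot.mk (lensRel n k χ) (wSmul χ s z) = Quot.mk _ (wSmul χ t z) := by
  have hs : (s : ℂ) ≠ 0 := by simp [← norm_ne_zero_iff, s.2]
  refine Quot.sound ⟨t / s, by rw [div_pow, ← h, div_self (pow_ne_zero _ hs)], fun i => ?_⟩
  simp only [wSmul, div_pow]
  field_simp

variable (k : ℕ)

def prodAct (t : 𝕋) (p : Sph n × 𝕋) : Sph n × 𝕋 :=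
  (wSmul χ t p.1, ⟨(t : ℂ) ^ k * p.2, by simp [t.2, p.2.2]⟩)

lemma continuous_prodAct : Continuous fun q : 𝕋 × (Sph n × 𝕋) => prodAct χ k q.1 q.2 := by
  refine ((continuous_wSmul χ).comp (continuous_fst.prodMk (continuous_fst.comp continuous_snd)))
    |>.prodMk (Continuous.subtype_mk ?_ _)
  fun_prop

abbrev Orbits : Type := Quot fun x y : Sph n × 𝕋 => ∃ t, prodAct χ k t x = y

variable {k}

lemma exists_pow_mul_eq_one (hk : k ≠ 0) (w : 𝕋) : ∃ t : 𝕋, (t : ℂ) ^ k * w = 1 := by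
  obtain ⟨t, ht⟩ := exists_pow_eq_of_norm_eq_one hk ⟨conj (w : ℂ), by simp [w.2]⟩
  exact ⟨t, by simp [ht, Complex.conj_mul', w.2]⟩

def toLens (hk : k ≠ 0) (p : Sph n × 𝕋) : Lens n k χ :=
  Quot.mk _ (wSmul χ (exists_pow_mul_eq_one hk p.2).choose p.1)

lemma toLens_eq (hk : k ≠ 0) {p : Sph n × 𝕋} {t : 𝕋} (ht : (t : ℂ) ^ k * p.2 = 1) :
    toLens χ hk p = Quot.mk _ (wSmul χ t p.1) := by
  have hw : (p.2 : ℂ) ≠ 0 := by simp [← norm_ne_zero_iff, p.2.2]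
  exact lensMk_wSmul_eq_of_pow_eq χ
    (mul_right_cancel₀ hw ((exists_pow_mul_eq_one hk p.2).choose_spec.trans ht.symm)) p.1

lemma toLens_prodAct (hk : k ≠ 0) (s : 𝕋) (p : Sph n × 𝕋) :
    toLens χ hk (prodAct χ k s p) = toLens χ hk p := by
  obtain ⟨r, hr⟩ := exists_pow_mul_eq_one hk (prodAct χ k s p).2
  rw [toLens_eq χ hk hr, toLens_eq χ hk (t := ⟨r * s, by simp [r.2, s.2]⟩) (p := p)]
  · exact congrArg _ (wSmul_wSmul χ r s p.1)
  · simpa [prodAct, mul_pow, mul_assoc] using hr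

lemma toLens_mk_one (hk : k ≠ 0) (z : Sph n) :
    toLens χ hk (z, ⟨1, norm_one⟩) = Quot.mk _ z := by
  rw [toLens_eq χ hk (t := ⟨1, norm_one⟩) (by simp), wSmul_one]

lemma isQuotientMap_prodAct_one (hk : k ≠ 0) :
    IsQuotientMap fun q : 𝕋 × Sph n => prodAct χ k q.1 (q.2, ⟨1, norm_one⟩) := by
  refine .of_surjective_continuous (fun ⟨z, w⟩ => ?_) <| (continuous_prodAct χ k).comp
    (continuous_fst.prodMk (continuous_snd.prodMk continuous_const))
  obtain ⟨t, ht⟩ := exists_pow_eq_of_norm_eq_one hk w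
  exact ⟨(t, wSmul χ ⟨conj (t : ℂ), by simp [t.2]⟩ z),
    Prod.ext (wSmul_wSmul_conj χ t z) (Subtype.ext (by simp [prodAct, ht]))⟩

lemma continuous_toLens (hk : k ≠ 0) : Continuous (toLens χ hk) := by
  rw [(isQuotientMap_prodAct_one χ hk).continuous_iff]
  have h : toLens χ hk ∘ (fun q : 𝕋 × Sph n => prodAct χ k q.1 (q.2, ⟨1, norm_one⟩)) =
      fun q => Quot.mk _ q.2 :=
    funext fun q => (toLens_prodAct χ hk q.1 _).trans (toLens_mk_one χ hk q.2)
  exact h ▸ continuous_quot_mk.comp continuous_snd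

def orbitsHomeomorphLens (hk : k ≠ 0) : Orbits χ k ≃ₜ Lens n k χ where
  toFun := Quot.lift (toLens χ hk) fun _ _ ⟨t, h⟩ => h ▸ (toLens_prodAct χ hk t _).symm
  invFun := Quot.lift (fun z => Quot.mk _ (z, ⟨1, norm_one⟩)) fun _ _ ⟨ζ, hζ, h⟩ =>
    Quot.sound ⟨⟨ζ, Complex.norm_eq_one_of_pow_eq_one hζ hk⟩,
      Prod.ext (Subtype.ext (funext fun i => (h i).symm)) (Subtype.ext (by simp [prodAct, hζ]))⟩
  left_inv := Quot.ind fun p => (Quot.sound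
    ⟨_, Prod.ext rfl (Subtype.ext (exists_pow_mul_eq_one hk p.2).choose_spec)⟩).symm
  right_inv := Quot.ind (toLens_mk_one χ hk)
  continuous_toFun := continuous_quot_lift _ (continuous_toLens χ hk)
  continuous_invFun :=
    continuous_quot_lift _ (continuous_quot_mk.comp (continuous_id.prodMk continuous_const))

end WeightedCircleAction

theorem statement15_general (n : ℕ) (χ : Fin (n + 1) → ℕ) (hχ : ∀ i, 1 ≤ χ i) :
    ∃ act : {t : ℂ // ‖t‖ = 1} →
        Sph n × {w : ℂ // ‖w‖ = 1} → Sph n × {w : ℂ // ‖w‖ = 1},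
      Continuous (fun p : {t : ℂ // ‖t‖ = 1} ×
          (Sph n × {w : ℂ // ‖w‖ = 1}) => act p.1 p.2) ∧
      (∀ (t : {t : ℂ // ‖t‖ = 1}) (z : Sph n × {w : ℂ // ‖w‖ = 1}),
        (((act t z).1 : Fin n → ℂ) =
            fun i => (t : ℂ) ^ χ i.castSucc * (z.1 : Fin n → ℂ) i) ∧
        ((act t z).2 : ℂ) = (t : ℂ) ^ χ (Fin.last n) * (z.2 : ℂ)) ∧
      Nonempty (Quot (fun x y : Sph n × {w : ℂ // ‖w‖ = 1} =>
          ∃ t : {t : ℂ // ‖t‖ = 1}, act t x = y) ≃ₜ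
        Lens n (χ (Fin.last n)) (fun i => χ i.castSucc)) :=
  ⟨prodAct (fun i => χ i.castSucc) (χ (Fin.last n)), continuous_prodAct _ _,
    fun _ _ => ⟨rfl, rfl⟩, ⟨orbitsHomeomorphLens _ (Nat.one_le_iff_ne_zero.mp (hχ _))⟩⟩

/-- The circle `T` acts continuously on `S^{2n-1} × S^1` by
`t·(z,w) = ((t^{χ_0}z_0, …, t^{χ_{n-1}}z_{n-1}), t^{χ_n}w)`, and the orbit space of this
action is homeomorphic to the weighted lens space `L(χ_n; χ')`, where `χ' = (χ_0,…,χ_{n-1})`. -/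
theorem statement15 (n : ℕ) (hn : 1 ≤ n) (χ : Fin (n + 1) → ℕ) (hχ : ∀ i, 1 ≤ χ i) :
    ∃ act : {t : ℂ // ‖t‖ = 1} →
        Sph n × {w : ℂ // ‖w‖ = 1} → Sph n × {w : ℂ // ‖w‖ = 1},
      Continuous (fun p : {t : ℂ // ‖t‖ = 1} ×
          (Sph n × {w : ℂ // ‖w‖ = 1}) => act p.1 p.2) ∧
      (∀ (t : {t : ℂ // ‖t‖ = 1}) (z : Sph n × {w : ℂ // ‖w‖ = 1}),
        (((act t z).1 : Fin n → ℂ) =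
            fun i => (t : ℂ) ^ χ i.castSucc * (z.1 : Fin n → ℂ) i) ∧
        ((act t z).2 : ℂ) = (t : ℂ) ^ χ (Fin.last n) * (z.2 : ℂ)) ∧
      Nonempty (Quot (fun x y : Sph n × {w : ℂ // ‖w‖ = 1} =>
          ∃ t : {t : ℂ // ‖t‖ = 1}, act t x = y) ≃ₜ
        Lens n (χ (Fin.last n)) (fun i => χ i.castSucc)) :=
  statement15_general n χ hχ
end
end

section
/- Let n ≥ 1 and let χ be a weakly divisive weight vector, i.e. χ_j divides χ_n for every 0 ≤ j < n. Let χ' = (χ_0, …, χ_{n-1}) and let f : L(χ_n; χ') → P(χ') be the natural projection, sending the class in L(χ_n;χ') of z ∈ S^{2n-1} to [z]_{χ'}. Then P(χ) is homeomorphic to the mapping cone of f, i.e. to the quotient of (L(χ_n;χ') × [0,1]) ⊔ P(χ') by the relations (x, 0) ∼ (x', 0) for all x, x' ∈ L(χ_n;χ') and (x, 1) ∼ f(x) for all x ∈ L(χ_n;χ'), with the quotient topology. (Equivalently: P(χ) is the Thom space of a complex line bundle over P(χ') whose unit sphere bundle projection is f.) -/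
noncomputable section

/-!
`P(χ)` is swept out by the points `[√s·z, √(1-s)]_χ` with `z ∈ S^{2n-1}` and `s ∈ [0,1]`.
Comparing norms of the first `n` coordinates shows that `s` is determined by the point. At
`s = 0` the point is `[0, …, 0, 1]_χ` whatever `z` is; at `s = 1` it is `[z, 0]_χ`, which
depends only on `[z]_{χ'}`; and for `0 < s < 1` the unimodular scalar `t` relating two such
points satisfies `t^{χ_n} = 1`, so it depends exactly on the class of `z` in `L(χ_n;χ')`.
Every point is reached, since rotating by a `t` with `t^{χ_n} = u_n/|u_n|` makes the last
coordinate real and nonnegative. This gives a continuous bijection from the mapping cone,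
which is compact, onto the Hausdorff space `P(χ)`.
-/

namespace WeightedProjective

section Sphere

variable {m : ℕ}

instance : CompactSpace (Sph m) := by
  refine isCompact_iff_compactSpace.mp <|
    (isCompact_closedBall (0 : Fin m → ℂ) 1).of_isClosed_subset
      (isClosed_eq (by fun_prop) continuous_const) fun z hz => ?_
  rw [Metric.mem_closedBall, dist_zero_right, pi_norm_le_iff_of_nonneg zero_le_one]
  intro i
  have hi : ‖z i‖ ^ 2 ≤ 1 :=
    hz ▸ Finset.single_le_sum (f := fun j => ‖z j‖ ^ 2) (fun j _ => by positivity)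
      (Finset.mem_univ i)
  exact (pow_le_one_iff_of_nonneg (norm_nonneg _) two_ne_zero).mp hi

def wsmul (χ : Fin m → ℕ) (t : Metric.sphere (0 : ℂ) 1) (z : Sph m) : Sph m :=
  ⟨fun i => (t : ℂ) ^ χ i * z.1 i, by simpa [norm_mul, norm_pow] using z.2⟩

lemma continuous_wsmul (χ : Fin m → ℕ) :
    Continuous fun p : Metric.sphere (0 : ℂ) 1 × Sph m => wsmul χ p.1 p.2 :=
  (continuous_pi fun i => ((continuous_subtype_val.comp continuous_fst).pow _).mul
    ((continuous_apply i).comp (continuous_subtype_val.comp continuous_snd))).subtype_mk _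

lemma wRel_iff_exists_wsmul {χ : Fin m → ℕ} {z w : Sph m} :
    wRel m χ z w ↔ ∃ t, wsmul χ t z = w := by
  constructor
  · rintro ⟨t, ht, h⟩
    exact ⟨⟨t, mem_sphere_zero_iff_norm.mpr ht⟩, Subtype.ext (funext fun i => (h i).symm)⟩
  · rintro ⟨t, rfl⟩
    exact ⟨t, norm_eq_of_mem_sphere t, fun _ => rfl⟩

lemma wRel_equivalence (χ : Fin m → ℕ) : Equivalence (wRel m χ) where
  refl _ := ⟨1, norm_one, fun _ => by rw [one_pow, one_mul]⟩
  symm := by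
    rintro z w ⟨t, ht, h⟩
    have ht0 : t ≠ 0 := norm_ne_zero_iff.mp (ht ▸ one_ne_zero)
    refine ⟨t⁻¹, by rw [norm_inv, ht, inv_one], fun i => ?_⟩
    rw [h i, ← mul_assoc, ← mul_pow, inv_mul_cancel₀ ht0, one_pow, one_mul]
  trans := by
    rintro z w v ⟨t, ht, h⟩ ⟨u, hu, h'⟩
    exact ⟨u * t, by rw [norm_mul, ht, hu, one_mul],
      fun i => by rw [h' i, h i, ← mul_assoc, ← mul_pow]⟩

lemma wpMk_eq_iff {χ : Fin m → ℕ} {z w : Sph m} : wpMk m χ z = wpMk m χ w ↔ wRel m χ z w :=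
  Quot.eq.trans (wRel_equivalence χ).eqvGen_iff

lemma isOpenQuotientMap_wpMk (χ : Fin m → ℕ) : IsOpenQuotientMap (wpMk m χ) := by
  refine ⟨Quot.mk_surjective, continuous_quot_mk, fun U hU => ?_⟩
  rw [← isQuotientMap_quot_mk.isOpen_preimage]
  have hsat : wpMk m χ ⁻¹' (wpMk m χ '' U) = ⋃ t, wsmul χ t ⁻¹' U := by
    ext z
    simp only [Set.mem_preimage, Set.mem_image, Set.mem_iUnion, wpMk_eq_iff]
    constructor
    · rintro ⟨u, hu, hzu⟩
      obtain ⟨t, rfl⟩ := wRel_iff_exists_wsmul.mp ((wRel_equivalence χ).symm hzu)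
      exact ⟨t, hu⟩
    · rintro ⟨t, ht⟩
      exact ⟨_, ht, (wRel_equivalence χ).symm (wRel_iff_exists_wsmul.mpr ⟨t, rfl⟩)⟩
  exact hsat ▸ isOpen_iUnion fun t => hU.preimage
    ((continuous_wsmul χ).comp (Continuous.prodMk_right t))

instance (χ : Fin m → ℕ) : T2Space (WP m χ) := by
  rw [t2Space_iff_of_isOpenQuotientMap (isOpenQuotientMap_wpMk χ)]
  have hgraph : {q : Sph m × Sph m | wpMk m χ q.1 = wpMk m χ q.2}
      = Set.range fun p : Metric.sphere (0 : ℂ) 1 × Sph m => (p.2, wsmul χ p.1 p.2) := by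
    ext ⟨z, w⟩
    simp only [Set.mem_ofPred_eq, Set.mem_range, Prod.mk.injEq, wpMk_eq_iff,
      wRel_iff_exists_wsmul]
    exact ⟨fun ⟨t, h⟩ => ⟨(t, z), rfl, h⟩, fun ⟨(t, z'), hz, h⟩ => ⟨t, hz ▸ h⟩⟩
  rw [hgraph]
  exact (isCompact_range (continuous_snd.prodMk (continuous_wsmul χ))).isClosed

end Sphere

section Join

variable {n : ℕ}

lemma sum_norm_sqrt_mul_sq (z : Sph n) {s : ℝ} (hs : 0 ≤ s) :
    ∑ j, ‖(Real.sqrt s : ℂ) * z.1 j‖ ^ 2 = s := by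
  simp_rw [norm_mul, mul_pow, Complex.norm_real, Real.norm_eq_abs, sq_abs, Real.sq_sqrt hs,
    ← Finset.mul_sum, z.2, mul_one]

def joinPoint (z : Sph n) (s : Set.Icc (0 : ℝ) 1) : Sph (n + 1) :=
  ⟨Fin.snoc (α := fun _ => ℂ) (fun j => (Real.sqrt s : ℂ) * z.1 j) (Real.sqrt (1 - s) : ℂ), by
    rw [Fin.sum_univ_castSucc]
    simp only [Fin.snoc_castSucc, Fin.snoc_last]
    rw [sum_norm_sqrt_mul_sq z s.2.1, Complex.norm_real, Real.norm_eq_abs, sq_abs,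
      Real.sq_sqrt (sub_nonneg.mpr s.2.2), add_sub_cancel]⟩

@[simp]
lemma joinPoint_castSucc (z : Sph n) (s : Set.Icc (0 : ℝ) 1) (j : Fin n) :
    (joinPoint z s).1 j.castSucc = (Real.sqrt s : ℂ) * z.1 j := by
  simp [joinPoint]

@[simp]
lemma joinPoint_last (z : Sph n) (s : Set.Icc (0 : ℝ) 1) :
    (joinPoint z s).1 (Fin.last n) = (Real.sqrt (1 - s) : ℂ) := by
  simp [joinPoint]

lemma joinPoint_zero (z z' : Sph n) : joinPoint z 0 = joinPoint z' 0 :=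
  Subtype.ext (by simp [joinPoint])

lemma continuous_joinPoint :
    Continuous fun p : Sph n × Set.Icc (0 : ℝ) 1 => joinPoint p.1 p.2 := by
  refine (continuous_pi fun i => ?_).subtype_mk _
  induction i using Fin.lastCases with
  | last =>
    simp only [Fin.snoc_last]
    fun_prop
  | cast j =>
    simp only [Fin.snoc_castSucc]
    exact (Complex.continuous_ofReal.comp (Real.continuous_sqrt.comp
      (continuous_subtype_val.comp continuous_snd))).mul
      ((continuous_apply j).comp (continuous_subtype_val.comp continuous_fst))

lemma wRel_succ_iff {χ : Fin (n + 1) → ℕ} {z w : Sph (n + 1)} :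
    wRel (n + 1) χ z w ↔ ∃ t : ℂ, ‖t‖ = 1 ∧
      w.1 (Fin.last n) = t ^ χ (Fin.last n) * z.1 (Fin.last n) ∧
      ∀ j : Fin n, w.1 j.castSucc = t ^ χ j.castSucc * z.1 j.castSucc := by
  simp only [wRel, Fin.forall_iff_castSucc]

variable {χ : Fin (n + 1) → ℕ} {z z' : Sph n} {s s' : Set.Icc (0 : ℝ) 1}

lemma wRel_joinPoint {t : ℂ} (ht : ‖t‖ = 1)
    (hlast : t ^ χ (Fin.last n) * Real.sqrt (1 - s) = Real.sqrt (1 - s))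
    (h : ∀ j, z'.1 j = t ^ χ j.castSucc * z.1 j) :
    wRel (n + 1) χ (joinPoint z s) (joinPoint z' s) :=
  wRel_succ_iff.mpr ⟨t, ht, by simpa using hlast.symm, fun j => by
    simp only [joinPoint_castSucc, h j]
    ring⟩

lemma eq_of_wRel_joinPoint (h : wRel (n + 1) χ (joinPoint z s) (joinPoint z' s')) : s = s' := by
  obtain ⟨t, ht, -, h⟩ := wRel_succ_iff.mp h
  apply Subtype.ext
  rw [← sum_norm_sqrt_mul_sq z s.2.1, ← sum_norm_sqrt_mul_sq z' s'.2.1]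
  refine Finset.sum_congr rfl fun j _ => ?_
  rw [← joinPoint_castSucc, ← joinPoint_castSucc, h j, norm_mul, norm_pow, ht, one_pow, one_mul]

lemma wRel_of_wRel_joinPoint_one (h : wRel (n + 1) χ (joinPoint z 1) (joinPoint z' 1)) :
    wRel n (fun i => χ i.castSucc) z z' := by
  obtain ⟨t, ht, -, h⟩ := wRel_succ_iff.mp h
  exact ⟨t, ht, fun j => by simpa using h j⟩

lemma lensRel_of_wRel_joinPoint (hs0 : 0 < (s : ℝ)) (hs1 : (s : ℝ) < 1)
    (h : wRel (n + 1) χ (joinPoint z s) (joinPoint z' s)) :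
    lensRel n (χ (Fin.last n)) (fun i => χ i.castSucc) z z' := by
  obtain ⟨t, -, hlast, h⟩ := wRel_succ_iff.mp h
  simp only [joinPoint_castSucc, joinPoint_last] at hlast h
  have hsqrt : (Real.sqrt s : ℂ) ≠ 0 := Complex.ofReal_ne_zero.mpr (Real.sqrt_ne_zero'.mpr hs0)
  have hsqrt' : (Real.sqrt (1 - s) : ℂ) ≠ 0 :=
    Complex.ofReal_ne_zero.mpr (Real.sqrt_ne_zero'.mpr (sub_pos.mpr hs1))
  refine ⟨t, (mul_eq_right₀ hsqrt').mp hlast.symm, fun j => mul_left_cancel₀ hsqrt ?_⟩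
  rw [h j]
  ring

lemma exists_norm_eq_one_pow_mul_norm_eq (c : ℂ) {k : ℕ} (hk : 0 < k) :
    ∃ t : ℂ, ‖t‖ = 1 ∧ t ^ k * ‖c‖ = c := by
  by_cases hc : c = 0
  · exact ⟨1, norm_one, by simp [hc]⟩
  have hc' : (‖c‖ : ℂ) ≠ 0 := by simpa using hc
  obtain ⟨t, htc⟩ := IsAlgClosed.exists_pow_nat_eq (c / ‖c‖) hk
  refine ⟨t, (pow_eq_one_iff_of_nonneg (norm_nonneg t) hk.ne').mp ?_, by
    rw [htc, div_mul_cancel₀ _ hc']⟩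
  rw [← norm_pow, htc, norm_div, Complex.norm_real, norm_norm, div_self (norm_ne_zero_iff.mpr hc)]

lemma exists_sqrt_mul_eq (hn : 0 < n) (v : Fin n → ℂ) :
    ∃ z : Sph n, ∀ j, (Real.sqrt (∑ i, ‖v i‖ ^ 2) : ℂ) * z.1 j = v j := by
  set r := ∑ i, ‖v i‖ ^ 2
  by_cases hr : r = 0
  · have hv : ∀ j, v j = 0 := fun j => by
      simpa using (Finset.sum_eq_zero_iff_of_nonneg (fun i _ => by positivity)).mp hr j
        (Finset.mem_univ j)
    refine ⟨⟨Pi.single ⟨0, hn⟩ 1, ?_⟩, fun j => by simp [hr, hv]⟩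
    rw [Finset.sum_eq_single_of_mem ⟨0, hn⟩ (Finset.mem_univ _) fun j _ hj => by simp [hj]]
    simp
  have hsqrt : (Real.sqrt r : ℂ) ≠ 0 := by
    simpa [Real.sqrt_eq_zero', not_le] using (lt_of_le_of_ne (by positivity) (Ne.symm hr))
  refine ⟨⟨fun j => v j / Real.sqrt r, ?_⟩, fun j => mul_div_cancel₀ _ hsqrt⟩
  simp only [norm_div, div_pow, Complex.norm_real, Real.norm_eq_abs, sq_abs,
    Real.sq_sqrt (by positivity : 0 ≤ r), ← Finset.sum_div]
  exact div_self hr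

lemma exists_wRel_joinPoint (hn : 0 < n) (hk : 0 < χ (Fin.last n)) (u : Sph (n + 1)) :
    ∃ z s, wRel (n + 1) χ (joinPoint z s) u := by
  set c := u.1 (Fin.last n)
  set s := ∑ j : Fin n, ‖u.1 j.castSucc‖ ^ 2
  have hsc : s + ‖c‖ ^ 2 = 1 := by simpa only [Fin.sum_univ_castSucc] using u.2
  have hs0 : 0 ≤ s := by positivity
  have hs1 : s ≤ 1 := by nlinarith [sq_nonneg ‖c‖]
  obtain ⟨t, ht, htc⟩ := exists_norm_eq_one_pow_mul_norm_eq c hk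
  have ht0 : t ≠ 0 := norm_ne_zero_iff.mp (ht ▸ one_ne_zero)
  set v : Fin n → ℂ := fun j => t⁻¹ ^ χ j.castSucc * u.1 j.castSucc
  have hv : ∑ j, ‖v j‖ ^ 2 = s := by
    simp only [v, norm_mul, norm_pow, norm_inv, ht, inv_one, one_pow, one_mul]
    rfl
  obtain ⟨z, hz⟩ := exists_sqrt_mul_eq hn v
  rw [hv] at hz
  refine ⟨z, ⟨s, Set.mem_Icc.mpr ⟨hs0, hs1⟩⟩, wRel_succ_iff.mpr ⟨t, ht, ?_, fun j => ?_⟩⟩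
  · change c = _
    rw [joinPoint_last, ← htc, show 1 - s = ‖c‖ ^ 2 by linarith, Real.sqrt_sq (norm_nonneg c)]
  · rw [joinPoint_castSucc, hz j, ← mul_assoc, ← mul_pow, mul_inv_cancel₀ ht0, one_pow, one_mul]

end Join

section

variable {X Y Z : Type*} (g : X → Y)

def MappingCone.Rel (a b : (X × Set.Icc (0 : ℝ) 1) ⊕ Y) : Prop :=
  (∃ x x' : X, ∃ s s' : Set.Icc (0 : ℝ) 1,
      a = Sum.inl (x, s) ∧ b = Sum.inl (x', s') ∧ (s : ℝ) = 0 ∧ (s' : ℝ) = 0) ∨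
    (∃ (x : X) (s : Set.Icc (0 : ℝ) 1), a = Sum.inl (x, s) ∧ (s : ℝ) = 1 ∧ b = Sum.inr (g x))

abbrev MappingCone : Type _ := Quot (MappingCone.Rel g)

namespace MappingCone

variable {g}

lemma mk_inl_eq_of_eq_zero {x x' : X} {s s' : Set.Icc (0 : ℝ) 1} (hs : (s : ℝ) = 0)
    (hs' : (s' : ℝ) = 0) :
    (Quot.mk _ (.inl (x, s)) : MappingCone g) = Quot.mk _ (.inl (x', s')) :=
  Quot.sound (Or.inl ⟨x, x', s, s', rfl, rfl, hs, hs'⟩)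

lemma mk_inl_one (x : X) :
    (Quot.mk _ (.inl (x, 1)) : MappingCone g) = Quot.mk _ (.inr (g x)) :=
  Quot.sound (Or.inr ⟨x, 1, rfl, rfl, rfl⟩)

variable (g) in
def lift (F : X × Set.Icc (0 : ℝ) 1 → Z) (G : Y → Z) (h0 : ∀ x x', F (x, 0) = F (x', 0))
    (h1 : ∀ x, F (x, 1) = G (g x)) : MappingCone g → Z :=
  Quot.lift (Sum.elim F G) <| by
    rintro _ _ (⟨x, x', s, s', rfl, rfl, hs, hs'⟩ | ⟨x, s, rfl, hs, rfl⟩)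
    · obtain rfl : s = 0 := Subtype.ext hs
      obtain rfl : s' = 0 := Subtype.ext hs'
      exact h0 x x'
    · obtain rfl : s = 1 := Subtype.ext hs
      exact h1 x

lemma continuous_lift [TopologicalSpace X] [TopologicalSpace Y] [TopologicalSpace Z]
    {F : X × Set.Icc (0 : ℝ) 1 → Z} {G : Y → Z} (hF : Continuous F) (hG : Continuous G)
    (h0 : ∀ x x', F (x, 0) = F (x', 0)) (h1 : ∀ x, F (x, 1) = G (g x)) :
    Continuous (lift g F G h0 h1) :=
  continuous_quot_lift _ (hF.sumElim hG)

end MappingCone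

end

section Cone

variable {n : ℕ} (χ : Fin (n + 1) → ℕ)

def cylinderMap (hk : 0 < χ (Fin.last n)) :
    Lens n (χ (Fin.last n)) (fun i => χ i.castSucc) × Set.Icc (0 : ℝ) 1 → WP (n + 1) χ :=
  fun p => Quot.lift (fun z => wpMk (n + 1) χ (joinPoint z p.2))
    (fun _ _ ⟨_, hζ, h⟩ => wpMk_eq_iff.mpr <|
      wRel_joinPoint (Complex.norm_eq_one_of_pow_eq_one hζ hk.ne') (by rw [hζ, one_mul]) h) p.1

def baseMap : WP n (fun i => χ i.castSucc) → WP (n + 1) χ :=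
  Quot.lift (fun z => wpMk (n + 1) χ (joinPoint z 1))
    (fun _ _ ⟨_, ht, h⟩ => wpMk_eq_iff.mpr (wRel_joinPoint ht (by simp) h))

lemma continuous_cylinderMap (hk : 0 < χ (Fin.last n)) : Continuous (cylinderMap χ hk) :=
  isQuotientMap_quot_mk.continuous_lift_prod_left (continuous_quot_mk.comp continuous_joinPoint)

lemma continuous_baseMap : Continuous (baseMap χ) :=
  continuous_quot_lift _ <| continuous_quot_mk.comp <|
    continuous_joinPoint.comp (continuous_id.prodMk continuous_const)

variable {χ} (f : Lens n (χ (Fin.last n)) (fun i => χ i.castSucc) → WP n (fun i => χ i.castSucc))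
  (hf : ∀ z, f (Quot.mk _ z) = wpMk n (fun i => χ i.castSucc) z)

variable (χ) in
def coneMap (hk : 0 < χ (Fin.last n)) : MappingCone f → WP (n + 1) χ :=
  MappingCone.lift f (cylinderMap χ hk) (baseMap χ)
    (by rintro ⟨z⟩ ⟨z'⟩; exact congrArg (wpMk (n + 1) χ) (joinPoint_zero z z'))
    (by rintro ⟨z⟩; exact (congrArg (baseMap χ) (hf z)).symm)

include hf in
lemma mk_inl_eq_mk_inr_of_wRel {z y : Sph n} {s : Set.Icc (0 : ℝ) 1}
    (h : wRel (n + 1) χ (joinPoint z s) (joinPoint y 1)) :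
    (Quot.mk _ (.inl (Quot.mk _ z, s)) : MappingCone f) = Quot.mk _ (.inr (wpMk _ _ y)) := by
  obtain rfl := eq_of_wRel_joinPoint h
  rw [MappingCone.mk_inl_one, hf]
  exact congrArg _ (congrArg _ (wpMk_eq_iff.mpr (wRel_of_wRel_joinPoint_one h)))

lemma coneMap_injective (hk : 0 < χ (Fin.last n)) : Function.Injective (coneMap χ f hf hk) := by
  rintro ⟨⟨⟨z⟩, s⟩ | ⟨⟨y⟩⟩⟩ ⟨⟨⟨z'⟩, s'⟩ | ⟨⟨y'⟩⟩⟩ hab <;> replace hab := wpMk_eq_iff.mp hab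
  · obtain rfl := eq_of_wRel_joinPoint hab
    by_cases hs0 : (s : ℝ) = 0
    · exact MappingCone.mk_inl_eq_of_eq_zero hs0 hs0
    by_cases hs1 : s = 1
    · subst hs1
      exact (mk_inl_eq_mk_inr_of_wRel f hf hab).trans
        (mk_inl_eq_mk_inr_of_wRel f hf ((wRel_equivalence χ).refl _)).symm
    have hs1' : (s : ℝ) ≠ 1 := fun h => hs1 (Subtype.ext h)
    rw [Quot.sound (lensRel_of_wRel_joinPoint (lt_of_le_of_ne s.2.1 (Ne.symm hs0))
      (lt_of_le_of_ne s.2.2 hs1') hab)]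
  · exact mk_inl_eq_mk_inr_of_wRel f hf hab
  · exact (mk_inl_eq_mk_inr_of_wRel f hf ((wRel_equivalence χ).symm hab)).symm
  · exact congrArg (fun y => Quot.mk _ (Sum.inr y))
      (wpMk_eq_iff.mpr (wRel_of_wRel_joinPoint_one hab))

lemma coneMap_surjective (hn : 0 < n) (hk : 0 < χ (Fin.last n)) :
    Function.Surjective (coneMap χ f hf hk) := by
  rintro ⟨u⟩
  obtain ⟨z, s, h⟩ := exists_wRel_joinPoint hn hk u
  exact ⟨Quot.mk _ (.inl (Quot.mk _ z, s)), wpMk_eq_iff.mpr h⟩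

end Cone

end WeightedProjective

open WeightedProjective

theorem statement17_general (n : ℕ) (hn : 1 ≤ n) (χ : Fin (n + 1) → ℕ) (hχ : ∀ i, 1 ≤ χ i)
    (f : Lens n (χ (Fin.last n)) (fun i => χ i.castSucc) → WP n (fun i => χ i.castSucc))
    (hf : ∀ z : Sph n,
      f (Quot.mk (lensRel n (χ (Fin.last n)) (fun i => χ i.castSucc)) z) =
        wpMk n (fun i => χ i.castSucc) z) :
    Nonempty (
      Quot (fun a b :
          (Lens n (χ (Fin.last n)) (fun i => χ i.castSucc) ×
            {s : ℝ // s ∈ Set.Icc (0 : ℝ) 1}) ⊕ WP n (fun i => χ i.castSucc) =>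
        (∃ x x' : Lens n (χ (Fin.last n)) (fun i => χ i.castSucc),
          ∃ s s' : {s : ℝ // s ∈ Set.Icc (0 : ℝ) 1},
            a = Sum.inl (x, s) ∧ b = Sum.inl (x', s') ∧ (s : ℝ) = 0 ∧ (s' : ℝ) = 0) ∨
        (∃ (x : Lens n (χ (Fin.last n)) (fun i => χ i.castSucc))
            (s : {s : ℝ // s ∈ Set.Icc (0 : ℝ) 1}),
          a = Sum.inl (x, s) ∧ (s : ℝ) = 1 ∧ b = Sum.inr (f x))) ≃ₜ
      WP (n + 1) χ) := by
  have hk := hχ (Fin.last n)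
  have hcont : Continuous (coneMap χ f hf hk) :=
    MappingCone.continuous_lift (continuous_cylinderMap χ hk) (continuous_baseMap χ) _ _
  exact ⟨hcont.homeoOfEquivCompactToT2 (f := Equiv.ofBijective _
    ⟨coneMap_injective f hf hk, coneMap_surjective f hf hn hk⟩)⟩

/-- For a weakly divisive weight vector `χ` (each `χ_j` with `j < n`
divides `χ_n`), `P(χ)` is homeomorphic to the mapping cone of the natural projection
`f : L(χ_n;χ') → P(χ')`, i.e. to the quotient of `(L(χ_n;χ') × [0,1]) ⊔ P(χ')` by the
relations `(x,0) ∼ (x',0)` and `(x,1) ∼ f(x)`. -/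
theorem statement17 (n : ℕ) (hn : 1 ≤ n) (χ : Fin (n + 1) → ℕ) (hχ : ∀ i, 1 ≤ χ i)
    (hdiv : ∀ j : Fin n, χ j.castSucc ∣ χ (Fin.last n))
    (f : Lens n (χ (Fin.last n)) (fun i => χ i.castSucc) → WP n (fun i => χ i.castSucc))
    (hfc : Continuous f)
    (hf : ∀ z : Sph n,
      f (Quot.mk (lensRel n (χ (Fin.last n)) (fun i => χ i.castSucc)) z) =
        wpMk n (fun i => χ i.castSucc) z) :
    Nonempty (
      Quot (fun a b :
          (Lens n (χ (Fin.last n)) (fun i => χ i.castSucc) ×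
            {s : ℝ // s ∈ Set.Icc (0 : ℝ) 1}) ⊕ WP n (fun i => χ i.castSucc) =>
        (∃ x x' : Lens n (χ (Fin.last n)) (fun i => χ i.castSucc),
          ∃ s s' : {s : ℝ // s ∈ Set.Icc (0 : ℝ) 1},
            a = Sum.inl (x, s) ∧ b = Sum.inl (x', s') ∧ (s : ℝ) = 0 ∧ (s' : ℝ) = 0) ∨
        (∃ (x : Lens n (χ (Fin.last n)) (fun i => χ i.castSucc))
            (s : {s : ℝ // s ∈ Set.Icc (0 : ℝ) 1}),
          a = Sum.inl (x, s) ∧ (s : ℝ) = 1 ∧ b = Sum.inr (f x))) ≃ₜ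
      WP (n + 1) χ) :=
  statement17_general n hn χ hχ f hf
end
end
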